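/- arXiv:2508.06091 — 3 statements merged into one kernel-verified Lean document; each statement's English description precedes it below -/
import Mathlib

section
/- For every d ∈ ℕ there exists a directed ACR-GNN node classifier with exactly 3 layers, in which every out-neighbourhood aggregation function agg→ is a constant function, such that for every finite directed labelled graph G of dimension d and every node v of G, the classifier outputs true at v if and only if the edge relation of G is a strict linear order. -/
/-- A strict linear order on a type `V`: an irreflexive, transitive and total
binary relation. -/
def IsStrictLinearOrderRel {V : Type} (E : V → V → Prop) : Prop :=
  (∀ v, ¬ E v v) ∧ (∀ u v w, E u v → E v w → E u w) ∧ (∀ u v : V, u ≠ v → E u v ∨ E v u)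

/-- The multiset `⟦f w : w ∈ V, p w⟧` of values of `f` on the elements satisfying `p`. -/
noncomputable def msetOf {V α : Type} [Fintype V] (p : V → Prop) (f : V → α) : Multiset α :=
  letI := Classical.decPred p
  ((Finset.univ.filter p).val.map f)

/-- A directed ACR-GNN layer: aggregation over in-neighbours, aggregation over
out-neighbours, a global readout (all mapping finite multisets of real vectors to real
vectors), and a combination function. -/
structure DACRLayer (din dout : ℕ) where
  m1 : ℕ
  m2 : ℕ
  m3 : ℕ
  aggIn : Multiset (Fin din → ℝ) → Fin m1 → ℝ
  aggOut : Multiset (Fin din → ℝ) → Fin m2 → ℝ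
  read : Multiset (Fin din → ℝ) → Fin m3 → ℝ
  comb : (Fin din → ℝ) → (Fin m1 → ℝ) → (Fin m2 → ℝ) → (Fin m3 → ℝ) → Fin dout → ℝ

/-- Applying a directed ACR-GNN layer to a directed graph with features `f`:
`λ'(v) = comb(λ(v), agg←(⟦λ(w) : E w v⟧), agg→(⟦λ(w) : E v w⟧), read(⟦λ(w) : w ∈ V⟧))`. -/
noncomputable def DACRLayer.apply {din dout : ℕ} (L : DACRLayer din dout)
    {V : Type} [Fintype V] (E : V → V → Prop) (f : V → Fin din → ℝ) :
    V → Fin dout → ℝ :=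
  fun v => L.comb (f v)
    (L.aggIn (msetOf (fun w => E w v) f))
    (L.aggOut (msetOf (fun w => E v w) f))
    (L.read (msetOf (fun _ => True) f))

/-- A `{0,1}`-label viewed as a real vector. -/
def boolVec {d : ℕ} (lab : Fin d → Bool) : Fin d → ℝ := fun i => if lab i then 1 else 0

/-!
A relation `E` on a finite set of `n` vertices is a strict linear order iff the in-degrees of
all vertices form the multiset `{0, …, n - 1}` and, at every vertex `v`, the in-degrees of the
in-neighbours of `v` form `{0, …, indeg v - 1}`; either side amounts to
`E w v ↔ indeg w < indeg v` with `indeg` injective. The first layer computes in-degrees, the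
second checks the local condition at each vertex through its in-neighbours, and the readout of
the third checks the global condition together with all local ones; out-neighbours are never
consulted.
-/

open Finset

theorem IsStrictLinearOrderRel.of_iff_lt {V α : Type} [LinearOrder α] {E : V → V → Prop}
    {f : V → α} (hf : Function.Injective f) (hE : ∀ u v, E u v ↔ f u < f v) :
    IsStrictLinearOrderRel E := by
  refine ⟨fun v => by simp [hE], fun u v w => by simpa only [hE] using lt_trans, ?_⟩
  intro u v huv
  simpa only [hE] using lt_or_gt_of_ne (hf.ne huv)

section Ranking

variable {V : Type} [Fintype V] {f : V → ℕ}

theorem injective_of_map_univ_eq_range (hf : univ.val.map f = Multiset.range (Fintype.card V)) :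
    Function.Injective f := fun a b hab =>
  Multiset.inj_on_of_nodup_map (hf ▸ Multiset.nodup_range _) a (mem_univ a) b (mem_univ b) hab

theorem map_univ_eq_range_of_injective (hf : Function.Injective f)
    (hlt : ∀ v, f v < Fintype.card V) : univ.val.map f = Multiset.range (Fintype.card V) := by
  refine Multiset.eq_of_le_of_card_le ?_ (by simp)
  rw [Multiset.le_iff_subset (univ.nodup.map hf)]
  intro k hk
  obtain ⟨v, -, rfl⟩ := Multiset.mem_map.mp hk
  exact Multiset.mem_range.mpr (hlt v)

theorem map_filter_lt_eq_range (hf : univ.val.map f = Multiset.range (Fintype.card V))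
    {k : ℕ} (hk : k ≤ Fintype.card V) :
    (univ.filter ((· < k) ∘ f)).val.map f = Multiset.range k := by
  rw [filter_val, ← Multiset.filter_map (· < k) f, hf]
  refine (Multiset.Nodup.ext ((Multiset.nodup_range _).filter _) (Multiset.nodup_range _)).mpr ?_
  intro i
  simp only [Multiset.mem_filter, Multiset.mem_range]
  omega

end Ranking

section Indeg

variable {V : Type} [Fintype V] (E : V → V → Prop) [DecidableRel E]

def indeg (v : V) : ℕ := (univ.filter (E · v)).card

variable {E}

theorem IsStrictLinearOrderRel.indeg_lt_indeg (hE : IsStrictLinearOrderRel E) {w v : V}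
    (hwv : E w v) : indeg E w < indeg E v := by
  refine card_lt_card ⟨fun u hu => ?_, fun hsub => hE.1 w ?_⟩
  · simp only [mem_filter, mem_univ, true_and] at hu ⊢
    exact hE.2.1 u w v hu hwv
  · simpa using hsub (by simpa using hwv)

theorem IsStrictLinearOrderRel.iff_indeg_lt (hE : IsStrictLinearOrderRel E) {w v : V} :
    E w v ↔ indeg E w < indeg E v := by
  refine ⟨hE.indeg_lt_indeg, fun hlt => ?_⟩
  rcases eq_or_ne w v with rfl | hwv
  · exact absurd hlt (lt_irrefl _)
  · exact (hE.2.2 w v hwv).resolve_right fun hvw => (hE.indeg_lt_indeg hvw).not_gt hlt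

theorem IsStrictLinearOrderRel.injective_indeg (hE : IsStrictLinearOrderRel E) :
    Function.Injective (indeg E) := by
  intro u v huv
  by_contra hne
  rcases hE.2.2 u v hne with h | h
  · exact (hE.indeg_lt_indeg h).ne huv
  · exact (hE.indeg_lt_indeg h).ne huv.symm

theorem indeg_lt_card (hirr : ∀ v, ¬ E v v) (v : V) : indeg E v < Fintype.card V :=
  card_lt_univ_of_notMem (x := v) (by simpa using hirr v)

theorem IsStrictLinearOrderRel.map_indeg_univ (hE : IsStrictLinearOrderRel E) :
    univ.val.map (indeg E) = Multiset.range (Fintype.card V) :=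
  map_univ_eq_range_of_injective hE.injective_indeg (indeg_lt_card hE.1)

theorem IsStrictLinearOrderRel.map_indeg_filter (hE : IsStrictLinearOrderRel E) (v : V) :
    (univ.filter (E · v)).val.map (indeg E) = Multiset.range (indeg E v) := by
  rw [filter_congr fun w _ => hE.iff_indeg_lt]
  exact map_filter_lt_eq_range hE.map_indeg_univ (indeg_lt_card hE.1 v).le

theorem IsStrictLinearOrderRel.of_map_indeg
    (hglobal : univ.val.map (indeg E) = Multiset.range (Fintype.card V))
    (hlocal : ∀ v, (univ.filter (E · v)).val.map (indeg E) = Multiset.range (indeg E v)) :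
    IsStrictLinearOrderRel E := by
  have hinj := injective_of_map_univ_eq_range hglobal
  refine .of_iff_lt hinj fun w v => ⟨fun hwv => ?_, fun hlt => ?_⟩
  · have : indeg E w ∈ Multiset.range (indeg E v) :=
      hlocal v ▸ Multiset.mem_map_of_mem _ (by simpa using hwv)
    simpa using this
  · obtain ⟨u, hu, hwu⟩ := Multiset.mem_map.mp ((hlocal v).symm ▸ Multiset.mem_range.mpr hlt)
    rw [← hinj hwu]
    simpa using hu

theorem isStrictLinearOrderRel_iff_map_indeg :
    IsStrictLinearOrderRel E ↔
      univ.val.map (indeg E) = Multiset.range (Fintype.card V) ∧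
        ∀ v, (univ.filter (E · v)).val.map (indeg E) = Multiset.range (indeg E v) :=
  ⟨fun hE => ⟨hE.map_indeg_univ, hE.map_indeg_filter⟩, fun h => .of_map_indeg h.1 h.2⟩

end Indeg

theorem msetOf_eq_map_filter {V α : Type} [Fintype V] (p : V → Prop) [DecidablePred p]
    (f : V → α) : msetOf p f = (univ.filter p).val.map f := by
  unfold msetOf
  congr

def IsNatRange (s : Multiset ℝ) : Prop :=
  s = (Multiset.range (Multiset.card s)).map (↑)

theorem isNatRange_map_natCast_iff {α : Type} (s : Multiset α) (g : α → ℕ) :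
    IsNatRange (s.map fun a => (g a : ℝ)) ↔ s.map g = Multiset.range (Multiset.card s) := by
  rw [IsNatRange, Multiset.card_map, ← Function.comp_def, ← Multiset.map_map]
  exact (Multiset.map_injective Nat.cast_injective).eq_iff

noncomputable def indegLayer (d : ℕ) : DACRLayer d 1 where
  m1 := 1
  m2 := 0
  m3 := 0
  aggIn M _ := Multiset.card M
  aggOut _ := Fin.elim0
  read _ := Fin.elim0
  comb _ a _ _ := a

open Classical in
noncomputable def localRangeLayer : DACRLayer 1 2 where
  m1 := 1
  m2 := 0
  m3 := 0
  aggIn M _ := if IsNatRange (M.map (· 0)) then 1 else 0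
  aggOut _ := Fin.elim0
  read _ := Fin.elim0
  comb x a _ _ := ![x 0, a 0]

open Classical in
noncomputable def globalRangeLayer : DACRLayer 2 1 where
  m1 := 0
  m2 := 0
  m3 := 1
  aggIn _ := Fin.elim0
  aggOut _ := Fin.elim0
  read M _ := if IsNatRange (M.map (· 0)) ∧ ∀ x ∈ M, x 1 = 1 then 1 else 0
  comb _ _ _ r := r

section Layers

variable {V : Type} [Fintype V] (E : V → V → Prop) [DecidableRel E]

theorem indegLayer_apply {d : ℕ} (x : V → Fin d → ℝ) :
    (indegLayer d).apply E x = fun w _ => (indeg E w : ℝ) := by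
  funext w
  simp only [DACRLayer.apply, indegLayer, msetOf_eq_map_filter, Multiset.card_map, card_val, indeg]

theorem localRangeLayer_apply :
    localRangeLayer.apply E (fun w _ => (indeg E w : ℝ)) = fun w => ![(indeg E w : ℝ),
      if (univ.filter (E · w)).val.map (indeg E) = Multiset.range (indeg E w) then 1 else 0] := by
  funext w
  simp only [DACRLayer.apply, localRangeLayer, msetOf_eq_map_filter, Multiset.map_map,
    Function.comp_def, isNatRange_map_natCast_iff, card_val]
  rfl

end Layers

theorem globalRangeLayer_apply_eq_one_iff {V : Type} [Fintype V] (E : V → V → Prop)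
    (f : V → ℕ) (P : V → Prop) [DecidablePred P] (v : V) :
    globalRangeLayer.apply E (fun w => ![(f w : ℝ), if P w then 1 else 0]) v 0 = 1 ↔
      univ.val.map f = Multiset.range (Fintype.card V) ∧ ∀ w, P w := by
  simp [DACRLayer.apply, globalRangeLayer, msetOf_eq_map_filter, Multiset.map_map,
    Function.comp_def, isNatRange_map_natCast_iff]

/-- for every `d` there is a directed ACR-GNN node classifier with exactly 3
layers, all of whose out-neighbourhood aggregations are constant functions, which accepts a
node of a finite directed labelled graph of dimension `d` iff the edge relation of the
graph is a strict linear order. -/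
theorem stmt3 (d : ℕ) :
    ∃ (d1 d2 d3 : ℕ) (L1 : DACRLayer d d1) (L2 : DACRLayer d1 d2) (L3 : DACRLayer d2 d3)
      (cls : (Fin d3 → ℝ) → Bool),
      (∃ y, ∀ M, L1.aggOut M = y) ∧ (∃ y, ∀ M, L2.aggOut M = y) ∧
      (∃ y, ∀ M, L3.aggOut M = y) ∧
      ∀ (V : Type) [Fintype V] (E : V → V → Prop), (∀ v, ¬ E v v) →
        ∀ (lab : V → Fin d → Bool) (v : V),
          (cls (L3.apply E (L2.apply E (L1.apply E (fun w => boolVec (lab w)))) v) = true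
            ↔ IsStrictLinearOrderRel E) := by
  refine ⟨1, 2, 1, indegLayer d, localRangeLayer, globalRangeLayer, fun z => decide (z 0 = 1),
    ⟨_, fun _ => rfl⟩, ⟨_, fun _ => rfl⟩, ⟨_, fun _ => rfl⟩, ?_⟩
  intro V _ E _ _ v
  classical
  rw [indegLayer_apply, localRangeLayer_apply, decide_eq_true_iff,
    globalRangeLayer_apply_eq_one_iff, isStrictLinearOrderRel_iff_map_indeg]
end

section
/- Let ℓ, c ∈ ℕ and n = ℓ·c + 1, and let G be the directed labelled graph of dimension 1 with nodes v_{−n},…,v_n, edge relation E = {(v_i,v_j) : −n ≤ i < j ≤ n}, and all labels 0. Then for every k ≤ ℓ and all i, j ∈ {−(n−ck), …, n−ck}, W^k_c(v_i) = W^k_c(v_j) in G. -/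
/-- Truncate every multiplicity in a multiset to at most `c` (the `c`-bounded multiset). -/
noncomputable def trunc {α : Type} (c : ℕ) (M : Multiset α) : Multiset α :=
  letI := Classical.decEq α
  M.toFinset.val.bind fun a => Multiset.replicate (min c (M.count a)) a

/-- The type of colours of the (bounded) Weisfeiler–Leman algorithm after `ℓ` rounds, for
graphs of dimension `d`: a colour of round `ℓ+1` is a tuple of a colour of round `ℓ`
and four multisets of colours of round `ℓ`. -/
def WLC (d : ℕ) : ℕ → Type
  | 0 => Fin d → Bool
  | (ℓ+1) => WLC d ℓ × Multiset (WLC d ℓ) × Multiset (WLC d ℓ) × Multiset (WLC d ℓ) ×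
      Multiset (WLC d ℓ)

/-- The `c`-bounded Weisfeiler–Leman colouring `W^ℓ_c` on the directed labelled graph
`(V, E, lab)`:  `W^0_c(v) = lab v` and `W^{ℓ+1}_c(v)` is the tuple of `W^ℓ_c(v)` and the
`c`-bounded multisets of the previous colours over `←N(v)∩→N(v)`, `←N(v)∖→N(v)`,
`→N(v)∖←N(v)` and `V∖(N(v)∪{v})`. -/
noncomputable def WL {d : ℕ} {V : Type} [Fintype V] (E : V → V → Prop)
    (lab : V → Fin d → Bool) (c : ℕ) : (ℓ : ℕ) → V → WLC d ℓ
  | 0, v => lab v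
  | (ℓ+1), v =>
      (WL E lab c ℓ v,
       trunc c (msetOf (fun w => E w v ∧ E v w) (WL E lab c ℓ)),
       trunc c (msetOf (fun w => E w v ∧ ¬ E v w) (WL E lab c ℓ)),
       trunc c (msetOf (fun w => E v w ∧ ¬ E w v) (WL E lab c ℓ)),
       trunc c (msetOf (fun w => ¬ (E w v ∨ E v w) ∧ w ≠ v) (WL E lab c ℓ)))

/-- The vertex set `{v_{-n}, …, v_n}`, identified with the integer interval `[-n, n]`. -/
abbrev IntNode (n : ℕ) : Type := {i : ℤ // i ∈ Finset.Icc (-(n : ℤ)) (n : ℤ)}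

lemma count_trunc {α : Type} [inst : DecidableEq α] (c : ℕ) (M : Multiset α) (b : α) :
    (trunc c M).count b = min c (M.count b) := by
  unfold trunc
  rw [Subsingleton.elim (Classical.decEq α) inst]
  rw [Multiset.count_bind]
  rw [show (Multiset.map (fun a => (Multiset.replicate (min c (M.count a)) a).count b) M.toFinset.val).sum
      = ∑ a ∈ M.toFinset, (Multiset.replicate (min c (M.count a)) a).count b from rfl]
  rw [Finset.sum_eq_single b]
  · simp [Multiset.count_replicate]
  · intro a _ hab
    rw [Multiset.count_replicate, if_neg hab]
  · intro hb
    have h : M.count b = 0 := by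
      rw [Multiset.count_eq_zero]
      exact fun h => hb (Multiset.mem_toFinset.2 h)
    simp [h, Multiset.count_replicate]

lemma msetOf_congr {V α : Type} [Fintype V] {p q : V → Prop} (h : ∀ v, p v ↔ q v) (f : V → α) :
    msetOf p f = msetOf q f := by
  have hpq : p = q := funext fun v => propext (h v)
  rw [hpq]

lemma msetOf_eq_zero {V α : Type} [Fintype V] {p : V → Prop} (h : ∀ v, ¬ p v) (f : V → α) :
    msetOf p f = 0 := by
  unfold msetOf
  letI := Classical.decPred p
  rw [Finset.filter_false_of_mem (fun x _ => h x)]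
  rfl

lemma count_msetOf {V α : Type} [Fintype V] [inst : DecidableEq α] (p : V → Prop)
    [instp : DecidablePred p] (f : V → α) (a : α) :
    (msetOf p f).count a = (Finset.univ.filter (fun v => p v ∧ a = f v)).card := by
  unfold msetOf
  rw [Subsingleton.elim (Classical.decPred p) instp]
  rw [Multiset.count_map]
  rw [show ((Finset.univ.filter p).val.filter (fun v => a = f v)) = ((Finset.univ.filter p).filter (fun v => a = f v)).val from rfl]
  rw [Finset.filter_filter]
  rfl

lemma trunc_eq_of {α : Type} [DecidableEq α] (c : ℕ) (M M' : Multiset α) (σ : α)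
    (h1 : c ≤ M.count σ) (h2 : c ≤ M'.count σ)
    (h3 : ∀ a, a ≠ σ → M.count a = M'.count a) :
    trunc c M = trunc c M' := by
  ext a
  rw [count_trunc, count_trunc]
  by_cases h : a = σ
  · subst h
    rw [min_eq_left h1, min_eq_left h2]
  · rw [h3 a h]

/-- with `n = ℓ·c+1`, in the strict linear order on `v_{-n},…,v_n`
(edges `(v_i,v_j)` for `i<j`, all labels `0`), for every `k ≤ ℓ` all nodes `v_i` with
`i ∈ {-(n-ck), …, n-ck}` have the same `c`-bounded WL colour after `k` rounds. -/
theorem stmt8 (ℓ c n : ℕ) (hn : n = ℓ * c + 1)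
    (E : IntNode n → IntNode n → Prop)
    (hE : ∀ i j : IntNode n, E i j ↔ i.val < j.val)
    (lab : IntNode n → Fin 1 → Bool) (hlab : ∀ v i, lab v i = false) :
    ∀ k ≤ ℓ, ∀ i j : IntNode n,
      -((n : ℤ) - c * k) ≤ i.val → i.val ≤ (n : ℤ) - c * k →
      -((n : ℤ) - c * k) ≤ j.val → j.val ≤ (n : ℤ) - c * k →
      WL E lab c k i = WL E lab c k j := by
  classical
  intro k
  induction k with
  | zero =>
    intro _ i j _ _ _ _
    show lab i = lab j
    funext x
    rw [hlab, hlab]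
  | succ k ih =>
    intro hk i j hi1 hi2 hj1 hj2
    have hk' : k ≤ ℓ := Nat.le_of_succ_le hk
    set A : ℤ := (n : ℤ) - c * k with hA
    set B : ℤ := (n : ℤ) - c * (k+1 : ℕ) with hB
    have hBA : B = A - c := by rw [hA, hB]; push_cast; ring
    have hBpos : 0 < B := by
      have h1 : c * (k+1) ≤ ℓ * c := by
        calc c * (k+1) ≤ c * ℓ := Nat.mul_le_mul_left c hk
        _ = ℓ * c := Nat.mul_comm c ℓ
      have h2 : (c : ℤ) * ((k:ℤ)+1) ≤ (ℓ : ℤ) * c := by exact_mod_cast h1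
      rw [hB, hn]; push_cast; push_cast at h2; linarith
    have hAn : A ≤ (n : ℤ) := by
      rw [hA]
      have : (0:ℤ) ≤ (c:ℤ) * k := by positivity
      linarith
    have hc0 : (0:ℤ) ≤ c := by positivity
    -- bounds at level k for any node in the B-region
    have hreg : ∀ x : IntNode n, -B ≤ x.val → x.val ≤ B → -A ≤ x.val ∧ x.val ≤ A := by
      intro x h1 h2
      constructor <;> [linarith [hBA]; linarith [hBA]]
    set f : IntNode n → WLC 1 k := WL E lab c k with hf
    set σ : WLC 1 k := f i with hσ
    obtain ⟨hiA1, hiA2⟩ := hreg i hi1 hi2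
    obtain ⟨hjA1, hjA2⟩ := hreg j hj1 hj2
    have hcommon : ∀ x : IntNode n, -A ≤ x.val → x.val ≤ A → f x = σ := by
      intro x h1 h2
      exact ih hk' x i h1 h2 hiA1 hiA2
    -- rewriting predicates
    have hpred : ∀ x : IntNode n,
        msetOf (fun w => E w x ∧ ¬ E x w) f = msetOf (fun w => w.val < x.val) f := by
      intro x
      apply msetOf_congr
      intro w
      rw [hE, hE]
      exact ⟨fun h => h.1, fun h => ⟨h, fun h' => absurd h (lt_asymm h')⟩⟩
    have hsucc : ∀ x : IntNode n,
        msetOf (fun w => E x w ∧ ¬ E w x) f = msetOf (fun w => x.val < w.val) f := by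
      intro x
      apply msetOf_congr
      intro w
      rw [hE, hE]
      exact ⟨fun h => h.1, fun h => ⟨h, fun h' => absurd h (lt_asymm h')⟩⟩
    -- count lower bounds for the common colour
    have hmem : ∀ y : ℤ, -A ≤ y → y ≤ A → y ∈ Finset.Icc (-(n:ℤ)) (n:ℤ) := by
      intro y h1 h2
      rw [Finset.mem_Icc]
      constructor <;> linarith
    have hcount_lt : ∀ x : IntNode n, -B ≤ x.val → x.val ≤ B →
        c ≤ (msetOf (fun w : IntNode n => w.val < x.val) f).count σ := by
      intro x hx1 hx2
      obtain ⟨hxA1, hxA2⟩ := hreg x hx1 hx2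
      rw [count_msetOf]
      have hsurj : (Finset.Ico (-A) x.val).card ≤
          (Finset.univ.filter (fun w : IntNode n => w.val < x.val ∧ σ = f w)).card := by
        apply Finset.card_le_card_of_surjOn (fun w : IntNode n => w.val)
        intro y hy
        simp only [Finset.coe_Ico, Set.mem_Ico] at hy
        have hy2A : y ≤ A := le_trans (le_of_lt hy.2) hxA2
        refine ⟨⟨y, hmem y hy.1 hy2A⟩, ?_, rfl⟩
        simp only [Finset.coe_filter, Set.mem_setOf_eq, Finset.mem_univ, true_and]
        exact ⟨hy.2, (hcommon ⟨y, hmem y hy.1 hy2A⟩ hy.1 hy2A).symm⟩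
      refine le_trans ?_ hsurj
      rw [Int.card_Ico]
      omega
    have hcount_gt : ∀ x : IntNode n, -B ≤ x.val → x.val ≤ B →
        c ≤ (msetOf (fun w : IntNode n => x.val < w.val) f).count σ := by
      intro x hx1 hx2
      obtain ⟨hxA1, hxA2⟩ := hreg x hx1 hx2
      rw [count_msetOf]
      have hsurj : (Finset.Ioc x.val A).card ≤
          (Finset.univ.filter (fun w : IntNode n => x.val < w.val ∧ σ = f w)).card := by
        apply Finset.card_le_card_of_surjOn (fun w : IntNode n => w.val)
        intro y hy
        simp only [Finset.coe_Ioc, Set.mem_Ioc] at hy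
        have hy1A : -A ≤ y := le_trans hxA1 (le_of_lt hy.1)
        refine ⟨⟨y, hmem y hy1A hy.2⟩, ?_, rfl⟩
        simp only [Finset.coe_filter, Set.mem_setOf_eq, Finset.mem_univ, true_and]
        exact ⟨hy.1, (hcommon ⟨y, hmem y hy1A hy.2⟩ hy1A hy.2).symm⟩
      refine le_trans ?_ hsurj
      rw [Int.card_Ioc]
      omega
    -- other colour counts agree
    have hother_lt : ∀ a : WLC 1 k, a ≠ σ →
        (msetOf (fun w : IntNode n => w.val < i.val) f).count a
          = (msetOf (fun w : IntNode n => w.val < j.val) f).count a := by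
      intro a ha
      rw [count_msetOf, count_msetOf]
      congr 1
      apply Finset.filter_congr
      intro w _
      have main : ∀ x y : IntNode n, -B ≤ x.val → x.val ≤ B → -B ≤ y.val → y.val ≤ B →
          w.val < x.val ∧ a = f w → w.val < y.val := by
        intro x y hx1 hx2 hy1 hy2 ⟨hw, hfw⟩
        by_contra h
        push_neg at h
        obtain ⟨hxA1, hxA2⟩ := hreg x hx1 hx2
        obtain ⟨hyA1, hyA2⟩ := hreg y hy1 hy2
        have : f w = σ := hcommon w (le_trans hyA1 h) (le_of_lt (lt_of_lt_of_le hw hxA2))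
        exact ha (hfw.trans this)
      constructor
      · exact fun h => ⟨main i j hi1 hi2 hj1 hj2 h, h.2⟩
      · exact fun h => ⟨main j i hj1 hj2 hi1 hi2 h, h.2⟩
    have hother_gt : ∀ a : WLC 1 k, a ≠ σ →
        (msetOf (fun w : IntNode n => i.val < w.val) f).count a
          = (msetOf (fun w : IntNode n => j.val < w.val) f).count a := by
      intro a ha
      rw [count_msetOf, count_msetOf]
      congr 1
      apply Finset.filter_congr
      intro w _
      have main : ∀ x y : IntNode n, -B ≤ x.val → x.val ≤ B → -B ≤ y.val → y.val ≤ B →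
          x.val < w.val ∧ a = f w → y.val < w.val := by
        intro x y hx1 hx2 hy1 hy2 ⟨hw, hfw⟩
        by_contra h
        push_neg at h
        obtain ⟨hxA1, hxA2⟩ := hreg x hx1 hx2
        obtain ⟨hyA1, hyA2⟩ := hreg y hy1 hy2
        have : f w = σ := hcommon w (le_of_lt (lt_of_le_of_lt hxA1 hw)) (le_trans h hyA2)
        exact ha (hfw.trans this)
      constructor
      · exact fun h => ⟨main i j hi1 hi2 hj1 hj2 h, h.2⟩
      · exact fun h => ⟨main j i hj1 hj2 hi1 hi2 h, h.2⟩
    -- empty components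
    have hboth : ∀ x : IntNode n, msetOf (fun w => E w x ∧ E x w) f = 0 := by
      intro x
      apply msetOf_eq_zero
      intro w ⟨h1, h2⟩
      exact absurd ((hE x w).1 h2) (lt_asymm ((hE w x).1 h1))
    have hiso : ∀ x : IntNode n, msetOf (fun w => ¬ (E w x ∨ E x w) ∧ w ≠ x) f = 0 := by
      intro x
      apply msetOf_eq_zero
      intro w ⟨h1, h2⟩
      have : w.val ≠ x.val := fun h => h2 (Subtype.ext h)
      rcases lt_or_gt_of_ne this with h | h
      · exact h1 (Or.inl ((hE w x).2 h))
      · exact h1 (Or.inr ((hE x w).2 h))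
    -- assemble
    show (WL E lab c k i, _, _, _, _) = (WL E lab c k j, _, _, _, _)
    rw [Prod.mk.injEq, Prod.mk.injEq, Prod.mk.injEq, Prod.mk.injEq]
    refine ⟨ih hk' i j hiA1 hiA2 hjA1 hjA2, ?_, ?_, ?_, ?_⟩
    · rw [hboth i, hboth j]
    · rw [hpred i, hpred j]
      exact trunc_eq_of c _ _ σ (hcount_lt i hi1 hi2) (hcount_lt j hj1 hj2) hother_lt
    · rw [hsucc i, hsucc j]
      exact trunc_eq_of c _ _ σ (hcount_gt i hi1 hi2) (hcount_gt j hj1 hj2) hother_gt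
    · rw [hiso i, hiso j]
end

section
/- Let H be a finite undirected labelled graph of dimension 3 satisfying conditions φ₁, φ₂, φ₃, and φ₄. Let V' be the set of P₁-nodes of H and let E' ⊆ V'×V' be defined by E'(u,z) if and only if there is a gadgetised edge from u to z in H. Then E' is a strict linear order on V', and H is isomorphic to gad(V',E'). -/
/-- Vertices of the gadgetisation of a directed graph `(V, E)`: a node `v¹_u` for every
`u : V` (left summand) and, for every edge `e` of `E`, a node `v²_e` (right summand with
second component `false`) and a node `v³_e` (second component `true`). -/
def GadV {V : Type} (E : V → V → Prop) : Type :=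
  V ⊕ ({p : V × V // E p.1 p.2} × Bool)

/-- The (symmetric) adjacency relation of the gadgetisation: every edge `(u,w)` of the
original graph is replaced by the undirected path `v¹_u — v²_{(u,w)} — v³_{(u,w)} — v¹_w`. -/
def gadAdj {V : Type} (E : V → V → Prop) : GadV E → GadV E → Prop
  | Sum.inl u, Sum.inr (e, b) => (b = false ∧ e.val.1 = u) ∨ (b = true ∧ e.val.2 = u)
  | Sum.inr (e, b), Sum.inl u => (b = false ∧ e.val.1 = u) ∨ (b = true ∧ e.val.2 = u)
  | Sum.inr (e, b), Sum.inr (e', b') => e = e' ∧ b ≠ b'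
  | Sum.inl _, Sum.inl _ => False

/-- The labelling of the gadgetisation: `v¹`-nodes get label `(1,0,0)`, `v²`-nodes get
`(0,1,0)` and `v³`-nodes get `(0,0,1)`. -/
def gadLab {V : Type} (E : V → V → Prop) : GadV E → Fin 3 → Bool
  | Sum.inl _ => fun i => decide (i = 0)
  | Sum.inr (_, false) => fun i => decide (i = 1)
  | Sum.inr (_, true) => fun i => decide (i = 2)

noncomputable instance GadV.fintype {V : Type} [Fintype V] (E : V → V → Prop) :
    Fintype (GadV E) := by
  classical
  unfold GadV
  infer_instance

/-- An isomorphism of labelled graphs: an edge-preserving and label-preserving bijection. -/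
def IsoLabGraph {V₁ V₂ : Type} {d : ℕ} (E₁ : V₁ → V₁ → Prop) (lab₁ : V₁ → Fin d → Bool)
    (E₂ : V₂ → V₂ → Prop) (lab₂ : V₂ → Fin d → Bool) : Prop :=
  ∃ f : V₁ ≃ V₂, (∀ u v, E₁ u v ↔ E₂ (f u) (f v)) ∧ ∀ v, lab₁ v = lab₂ (f v)

/-- `(W, EH, labH)` is isomorphic to the gadgetisation of some (finite) strict linear
order. -/
def IsGadLin {W : Type} (EH : W → W → Prop) (labH : W → Fin 3 → Bool) : Prop :=
  ∃ (U : Type) (_ : Fintype U) (R : U → U → Prop),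
    IsStrictLinearOrderRel R ∧ IsoLabGraph EH labH (gadAdj R) (gadLab R)

/-- A gadgetised path from `u` to `z` via `w` (a `P₂` node) and `v` (a `P₃` node). -/
def GadPath {V : Type} (E : V → V → Prop) (lab : V → Fin 3 → Bool) (u w v z : V) : Prop :=
  lab u 0 = true ∧ lab w 1 = true ∧ lab v 2 = true ∧ lab z 0 = true ∧
    E u w ∧ E w v ∧ E v z

/-- There is a gadgetised edge from `u` to `z`. -/
def GadEdge {V : Type} (E : V → V → Prop) (lab : V → Fin 3 → Bool) (u z : V) : Prop :=
  ∃ w v, GadPath E lab u w v z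

/-- Condition φ₁: every node satisfies exactly one of `P₁, P₂, P₃`. -/
def phi1 {V : Type} (lab : V → Fin 3 → Bool) : Prop :=
  ∀ v : V,
    (lab v 0 = true ∧ lab v 1 = false ∧ lab v 2 = false) ∨
    (lab v 0 = false ∧ lab v 1 = true ∧ lab v 2 = false) ∨
    (lab v 0 = false ∧ lab v 1 = false ∧ lab v 2 = true)

/-- Condition φ₂: every `P₂`-node has exactly two neighbours, exactly one of them a
`P₁`-node and exactly one a `P₃`-node; every `P₃`-node has exactly two neighbours, exactly
one a `P₁`-node and exactly one a `P₂`-node; and no two `P₁`-nodes are adjacent. -/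
def phi2 {V : Type} [Fintype V] (E : V → V → Prop) (lab : V → Fin 3 → Bool) : Prop :=
  (∀ v : V, lab v 1 = true →
    Nat.card {w | E v w} = 2 ∧ Nat.card {w | E v w ∧ lab w 0 = true} = 1 ∧
      Nat.card {w | E v w ∧ lab w 2 = true} = 1) ∧
  (∀ v : V, lab v 2 = true →
    Nat.card {w | E v w} = 2 ∧ Nat.card {w | E v w ∧ lab w 0 = true} = 1 ∧
      Nat.card {w | E v w ∧ lab w 1 = true} = 1) ∧
  (∀ u v : V, lab u 0 = true → lab v 0 = true → ¬ E u v)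

/-- Condition φ₃: between any two distinct `P₁`-nodes there is exactly one gadgetised edge
in total (from `u` to `z` or from `z` to `u`). -/
def phi3 {V : Type} [Fintype V] (E : V → V → Prop) (lab : V → Fin 3 → Bool) : Prop :=
  ∀ u z : V, lab u 0 = true → lab z 0 = true → u ≠ z →
    Nat.card {p : V × V | GadPath E lab u p.1 p.2 z} +
      Nat.card {p : V × V | GadPath E lab z p.1 p.2 u} = 1

/-- Condition φ₄: there is no triangle of gadgetised edges. -/
def phi4 {V : Type} (E : V → V → Prop) (lab : V → Fin 3 → Bool) : Prop :=
  ¬ ∃ u v w : V, GadEdge E lab u v ∧ GadEdge E lab v w ∧ GadEdge E lab w u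

/-- `N₂ u`: the number of neighbours of `u` satisfying `P₂`. -/
noncomputable def N2 {V : Type} [Fintype V] (E : V → V → Prop) (lab : V → Fin 3 → Bool)
    (u : V) : ℕ :=
  Nat.card {w | E u w ∧ lab w 1 = true}

/-- Condition ψ: for all `0 ≤ i < j < |P₁|` there are `P₁`-nodes `u, w` with `N₂ u = j`,
`N₂ w = i` and a gadgetised edge from `u` to `w`. -/
def psiCond {V : Type} [Fintype V] (E : V → V → Prop) (lab : V → Fin 3 → Bool) : Prop :=
  ∀ i j : ℕ, i < j → j < Nat.card {v : V | lab v 0 = true} →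
    ∃ u w : V, lab u 0 = true ∧ lab w 0 = true ∧
      N2 E lab u = j ∧ N2 E lab w = i ∧ GadEdge E lab u w


/-!
By φ₄ a gadgetised edge is never a loop and never closes a triangle, and by φ₃ it is asymmetric
and total on `P₁`-nodes; this is exactly a strict linear order. For the isomorphism with the
gadgetisation, send `v¹_u` to `u` and `v²_{(u,z)}`, `v³_{(u,z)}` to the middle nodes of the
gadgetised path from `u` to `z`. By φ₂ every `P₂`- or `P₃`-node has exactly one neighbour of each
other label, so it lies on a gadgetised path, which is unique by φ₃, and its neighbours are
exactly the neighbours on that path.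
-/

theorem existsUnique_of_nat_card_eq_one {α : Type} {p : α → Prop}
    (h : Nat.card {x | p x} = 1) : ∃! x, p x := by
  obtain ⟨⟨a, ha⟩, hall⟩ := Nat.card_eq_one_iff_exists.mp h
  exact ⟨a, ha, fun b hb => congrArg Subtype.val (hall ⟨b, hb⟩)⟩

theorem Set.eq_or_eq_of_ncard_eq_two {α : Type} {s : Set α} (hs : s.ncard = 2) {a b c : α}
    (ha : a ∈ s) (hb : b ∈ s) (hab : a ≠ b) (hc : c ∈ s) : c = a ∨ c = b := by
  have hpair : ({a, b} : Set α) = s :=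
    Set.eq_of_subset_of_ncard_le (Set.insert_subset ha (Set.singleton_subset_iff.mpr hb))
      (by rw [hs, Set.ncard_pair hab]) (Set.finite_of_ncard_ne_zero (by omega))
  rw [← hpair] at hc
  exact hc

theorem isoLabGraph_of_bijective {V₁ V₂ : Type} {d : ℕ} {E₁ : V₁ → V₁ → Prop}
    {lab₁ : V₁ → Fin d → Bool} {E₂ : V₂ → V₂ → Prop} {lab₂ : V₂ → Fin d → Bool}
    {g : V₂ → V₁} (hg : Function.Bijective g) (hE : ∀ x y, E₂ x y ↔ E₁ (g x) (g y))
    (hlab : ∀ x, lab₂ x = lab₁ (g x)) : IsoLabGraph E₁ lab₁ E₂ lab₂ := by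
  refine ⟨(Equiv.ofBijective g hg).symm, fun u v => ?_, fun v => ?_⟩
  · simp only [hE, Equiv.ofBijective_apply_symm_apply]
  · simp only [hlab, Equiv.ofBijective_apply_symm_apply]

theorem gadAdj_comm {U : Type} (R : U → U → Prop) (x y : GadV R) :
    gadAdj R x y ↔ gadAdj R y x := by
  rcases x with u | ⟨e, b⟩ <;> rcases y with u' | ⟨e', b'⟩ <;> simp only [gadAdj, eq_comm, ne_comm]

section Gadget

variable {V : Type} {E : V → V → Prop} {lab : V → Fin 3 → Bool}

theorem phi1.lab_eq (h1 : phi1 lab) {v : V} {i : Fin 3} (hv : lab v i = true) :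
    lab v = fun j => decide (j = i) := by
  funext j
  rcases h1 v with ⟨h₀, h₁, h₂⟩ | ⟨h₀, h₁, h₂⟩ | ⟨h₀, h₁, h₂⟩ <;>
    fin_cases i <;> fin_cases j <;> simp_all

theorem phi1.eq_of_lab_eq_true (h1 : phi1 lab) {v : V} {i j : Fin 3} (hi : lab v i = true)
    (hj : lab v j = true) : j = i := by
  simpa [h1.lab_eq hi] using hj

theorem phi1.ne_of_lab_eq_true (h1 : phi1 lab) {u v : V} {i j : Fin 3} (hu : lab u i = true)
    (hv : lab v j = true) (hij : i ≠ j) : u ≠ v := by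
  rintro rfl
  exact hij (h1.eq_of_lab_eq_true hv hu)

theorem phi4.not_gadEdge_self (h4 : phi4 E lab) (u : V) : ¬ GadEdge E lab u u :=
  fun h => h4 ⟨u, u, u, h, h, h⟩

theorem phi4.ne_of_gadPath (h4 : phi4 E lab) {u w v z : V} (hp : GadPath E lab u w v z) :
    u ≠ z := by
  rintro rfl
  exact h4.not_gadEdge_self u ⟨w, v, hp⟩

/-- The relation `E'` on the `P₁`-nodes `V'`. -/
abbrev gadEdgeRel (E : V → V → Prop) (lab : V → Fin 3 → Bool)
    (u z : {v : V // lab v 0 = true}) : Prop :=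
  GadEdge E lab u.val z.val

-- The inverse of the isomorphism: `v²_{(u,z)}` and `v³_{(u,z)}` go to the middle nodes of the
-- gadgetised path from `u` to `z` (unique by φ₃).
noncomputable def gadNode (E : V → V → Prop) (lab : V → Fin 3 → Bool) :
    GadV (gadEdgeRel E lab) → V
  | Sum.inl u => u.val
  | Sum.inr (e, false) => e.2.choose
  | Sum.inr (e, true) => e.2.choose_spec.choose

theorem gadPath_gadNode (e : {p : {v : V // lab v 0 = true} × {v : V // lab v 0 = true} //
      gadEdgeRel E lab p.1 p.2}) :
    GadPath E lab e.1.1 (gadNode E lab (Sum.inr (e, false))) (gadNode E lab (Sum.inr (e, true)))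
      e.1.2 :=
  e.2.choose_spec.choose_spec

theorem gadLab_eq_lab_gadNode (h1 : phi1 lab) (x : GadV (gadEdgeRel E lab)) :
    gadLab (gadEdgeRel E lab) x = lab (gadNode E lab x) := by
  rcases x with u | ⟨e, _ | _⟩
  · exact (h1.lab_eq u.2).symm
  · exact (h1.lab_eq (gadPath_gadNode e).2.1).symm
  · exact (h1.lab_eq (gadPath_gadNode e).2.2.1).symm

variable [Fintype V]

theorem phi2.existsUnique_adj (h2 : phi2 E lab) {v : V} {i j : Fin 3}
    (hv : lab v i = true) (hi : i ≠ 0) (hij : i ≠ j) : ∃! w, E v w ∧ lab w j = true := by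
  apply existsUnique_of_nat_card_eq_one
  fin_cases i <;> fin_cases j <;> simp at hi hij
  exacts [(h2.1 v hv).2.1, (h2.1 v hv).2.2, (h2.2.1 v hv).2.1, (h2.2.1 v hv).2.2]

-- A `P₂`- or `P₃`-node has only two neighbours, and they carry the two other labels.
theorem phi2.not_adj_of_lab_eq_true (h1 : phi1 lab) (h2 : phi2 E lab) {u v : V}
    {i : Fin 3} (hu : lab u i = true) (hv : lab v i = true) : ¬ E u v := by
  intro huv
  by_cases hi : i = 0
  · subst hi
    exact h2.2.2 u v hu hv huv
  obtain ⟨k, hk0, hki⟩ : ∃ k : Fin 3, k ≠ 0 ∧ k ≠ i := by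
    revert hi; fin_cases i <;> decide
  obtain ⟨a, ⟨hua, ha⟩, -⟩ := h2.existsUnique_adj hu hi (j := 0) hi
  obtain ⟨c, ⟨huc, hc⟩, -⟩ := h2.existsUnique_adj hu hi (Ne.symm hki)
  have hcard : {w | E u w}.ncard = 2 := by
    rw [← Nat.card_coe_set_eq]
    revert hu hi; fin_cases i <;> intro hu hi
    exacts [absurd rfl hi, (h2.1 u hu).1, (h2.2.1 u hu).1]
  rcases Set.eq_or_eq_of_ncard_eq_two hcard hua huc (h1.ne_of_lab_eq_true ha hc hk0.symm)
    huv with rfl | rfl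
  exacts [hi (h1.eq_of_lab_eq_true ha hv), hki.symm (h1.eq_of_lab_eq_true hc hv)]

theorem phi2.eq_of_adj (h2 : phi2 E lab) {v a b : V} {i j : Fin 3}
    (hv : lab v i = true) (hi : i ≠ 0) (hij : i ≠ j) (ha : E v a) (ha' : lab a j = true)
    (hb : E v b) (hb' : lab b j = true) : a = b :=
  (h2.existsUnique_adj hv hi hij).unique ⟨ha, ha'⟩ ⟨hb, hb'⟩

theorem GadPath.eq_of_adj (hsym : ∀ u v, E u v → E v u) (h2 : phi2 E lab)
    {u w v z u' w' v' z' : V} (hp : GadPath E lab u w v z) (hq : GadPath E lab u' w' v' z')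
    (hwv' : E w v') : u = u' ∧ w = w' ∧ v = v' ∧ z = z' := by
  obtain ⟨hu, hw, hv, hz, huw, hwv, hvz⟩ := hp
  obtain ⟨hu', hw', hv', hz', huw', hwv'', hvz'⟩ := hq
  have hvv : v = v' := h2.eq_of_adj hw (by decide) (by decide) hwv hv hwv' hv'
  subst hvv
  have hww : w = w' :=
    h2.eq_of_adj hv (by decide) (by decide) (hsym _ _ hwv) hw (hsym _ _ hwv'') hw'
  subst hww
  exact ⟨h2.eq_of_adj hw (by decide) (by decide) (hsym _ _ huw) hu (hsym _ _ huw') hu', rfl,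
    rfl, h2.eq_of_adj hv (by decide) (by decide) hvz hz hvz' hz'⟩

theorem phi2.exists_gadPath_of_lab_one (hsym : ∀ u v, E u v → E v u)
    (h2 : phi2 E lab) {w : V} (hw : lab w 1 = true) : ∃ u v z, GadPath E lab u w v z := by
  obtain ⟨u, ⟨hwu, hu⟩, -⟩ := h2.existsUnique_adj hw (by decide) (j := 0) (by decide)
  obtain ⟨v, ⟨hwv, hv⟩, -⟩ := h2.existsUnique_adj hw (by decide) (j := 2) (by decide)
  obtain ⟨z, ⟨hvz, hz⟩, -⟩ := h2.existsUnique_adj hv (by decide) (j := 0) (by decide)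
  exact ⟨u, v, z, hu, hw, hv, hz, hsym _ _ hwu, hwv, hvz⟩

theorem phi2.exists_gadPath_of_lab_two (hsym : ∀ u v, E u v → E v u)
    (h2 : phi2 E lab) {v : V} (hv : lab v 2 = true) : ∃ u w z, GadPath E lab u w v z := by
  obtain ⟨w, ⟨hvw, hw⟩, -⟩ := h2.existsUnique_adj hv (by decide) (j := 1) (by decide)
  obtain ⟨z, ⟨hvz, hz⟩, -⟩ := h2.existsUnique_adj hv (by decide) (j := 0) (by decide)
  obtain ⟨u, ⟨hwu, hu⟩, -⟩ := h2.existsUnique_adj hw (by decide) (j := 0) (by decide)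
  exact ⟨u, w, z, hu, hw, hv, hz, hsym _ _ hwu, hsym _ _ hvw, hvz⟩

theorem phi3.ncard_add_ncard (h3 : phi3 E lab) {u z : V} (hu : lab u 0 = true)
    (hz : lab z 0 = true) (huz : u ≠ z) :
    {p : V × V | GadPath E lab u p.1 p.2 z}.ncard +
      {p : V × V | GadPath E lab z p.1 p.2 u}.ncard = 1 := by
  simpa only [Nat.card_coe_set_eq] using h3 u z hu hz huz

theorem phi3.gadPath_unique (h3 : phi3 E lab) (h4 : phi4 E lab) {u w v w' v' z : V}
    (hp : GadPath E lab u w v z) (hq : GadPath E lab u w' v' z) : w = w' ∧ v = v' := by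
  have hcard := h3.ncard_add_ncard hp.1 hp.2.2.2.1 (h4.ne_of_gadPath hp)
  have hle := (Set.ncard_le_one (s := {p : V × V | GadPath E lab u p.1 p.2 z})).mp
    (by omega) (w, v) hp (w', v') hq
  exact Prod.ext_iff.mp hle

theorem phi3.gadEdge_asymm (h3 : phi3 E lab) (h4 : phi4 E lab) {u z : V}
    (huz : GadEdge E lab u z) : ¬ GadEdge E lab z u := by
  obtain ⟨w, v, hp⟩ := huz
  rintro ⟨w', v', hq⟩
  have hcard := h3.ncard_add_ncard hp.1 hp.2.2.2.1 (h4.ne_of_gadPath hp)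
  have h₁ := (Set.ncard_pos (s := {p : V × V | GadPath E lab u p.1 p.2 z})).mpr ⟨(w, v), hp⟩
  have h₂ := (Set.ncard_pos (s := {p : V × V | GadPath E lab z p.1 p.2 u})).mpr ⟨(w', v'), hq⟩
  omega

theorem phi3.gadEdge_or (h3 : phi3 E lab) {u z : V} (hu : lab u 0 = true)
    (hz : lab z 0 = true) (huz : u ≠ z) : GadEdge E lab u z ∨ GadEdge E lab z u := by
  have hcard := h3.ncard_add_ncard hu hz huz
  rcases Nat.eq_zero_or_pos {p : V × V | GadPath E lab u p.1 p.2 z}.ncard with h | h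
  · obtain ⟨⟨w, v⟩, hp⟩ := (Set.ncard_pos).mp
      (show 0 < {p : V × V | GadPath E lab z p.1 p.2 u}.ncard by omega)
    exact .inr ⟨w, v, hp⟩
  · obtain ⟨⟨w, v⟩, hp⟩ := (Set.ncard_pos).mp h
    exact .inl ⟨w, v, hp⟩

theorem isStrictLinearOrderRel_gadEdgeRel (h3 : phi3 E lab) (h4 : phi4 E lab) :
    IsStrictLinearOrderRel (gadEdgeRel E lab) := by
  refine ⟨fun u => h4.not_gadEdge_self u.val, fun u v w huv hvw => ?_, fun u z huz => ?_⟩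
  · have huw : u.val ≠ w.val := by
      intro h
      exact h3.gadEdge_asymm h4 huv (h ▸ hvw)
    exact (h3.gadEdge_or u.2 w.2 huw).resolve_right fun hwu => h4 ⟨_, _, _, huv, hvw, hwu⟩
  · exact h3.gadEdge_or u.2 z.2 (Subtype.val_injective.ne huz)

theorem eq_of_adj_gadNode (hsym : ∀ u v, E u v → E v u) (h2 : phi2 E lab)
    {e e' : {p : {v : V // lab v 0 = true} × {v : V // lab v 0 = true} //
      gadEdgeRel E lab p.1 p.2}}
    (h : E (gadNode E lab (Sum.inr (e, false))) (gadNode E lab (Sum.inr (e', true)))) :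
    e = e' := by
  obtain ⟨hu, -, -, hz⟩ := (gadPath_gadNode e).eq_of_adj hsym h2 (gadPath_gadNode e') h
  exact Subtype.ext (Prod.ext (Subtype.ext hu) (Subtype.ext hz))

theorem gadNode_injective (hsym : ∀ u v, E u v → E v u) (h1 : phi1 lab) (h2 : phi2 E lab) :
    Function.Injective (gadNode E lab) := by
  intro x y h
  have hlab : gadLab _ x = gadLab _ y := by
    rw [gadLab_eq_lab_gadNode h1, gadLab_eq_lab_gadNode h1, h]
  -- labels at indices 0 and 1 separate the three kinds of nodes
  have hlab0 := congrFun hlab 0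
  have hlab1 := congrFun hlab 1
  rcases x with u | ⟨e, _ | _⟩ <;> rcases y with u' | ⟨e', _ | _⟩ <;>
    simp only [gadLab, decide_true, decide_false, Fin.reduceEq, Bool.false_eq_true,
      Bool.true_eq_false] at hlab0 hlab1
  · exact congrArg Sum.inl (Subtype.ext h)
  · have hp := (gadPath_gadNode e').2.2.2.2.2.1
    rw [← h] at hp
    rw [eq_of_adj_gadNode hsym h2 hp]
  · have hp := (gadPath_gadNode e).2.2.2.2.2.1
    rw [h] at hp
    rw [eq_of_adj_gadNode hsym h2 hp]

theorem gadNode_surjective (hsym : ∀ u v, E u v → E v u) (h1 : phi1 lab) (h2 : phi2 E lab)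
    (h3 : phi3 E lab) (h4 : phi4 E lab) : Function.Surjective (gadNode E lab) := by
  intro x
  rcases h1 x with ⟨hx, -, -⟩ | ⟨-, hx, -⟩ | ⟨-, -, hx⟩
  · exact ⟨Sum.inl ⟨x, hx⟩, rfl⟩
  · obtain ⟨u, v, z, hp⟩ := h2.exists_gadPath_of_lab_one hsym hx
    let e : {p : {v : V // lab v 0 = true} × {v : V // lab v 0 = true} //
      gadEdgeRel E lab p.1 p.2} := ⟨(⟨u, hp.1⟩, ⟨z, hp.2.2.2.1⟩), x, v, hp⟩
    exact ⟨Sum.inr (e, false), (h3.gadPath_unique h4 (gadPath_gadNode e) hp).1⟩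
  · obtain ⟨u, w, z, hp⟩ := h2.exists_gadPath_of_lab_two hsym hx
    let e : {p : {v : V // lab v 0 = true} × {v : V // lab v 0 = true} //
      gadEdgeRel E lab p.1 p.2} := ⟨(⟨u, hp.1⟩, ⟨z, hp.2.2.2.1⟩), w, x, hp⟩
    exact ⟨Sum.inr (e, true), (h3.gadPath_unique h4 (gadPath_gadNode e) hp).2⟩

theorem gadAdj_iff_adj_gadNode (hsym : ∀ u v, E u v → E v u) (h1 : phi1 lab)
    (h2 : phi2 E lab) (x y : GadV (gadEdgeRel E lab)) :
    gadAdj (gadEdgeRel E lab) x y ↔ E (gadNode E lab x) (gadNode E lab y) := by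
  have hE : ∀ a b, E a b ↔ E b a := fun a b => ⟨hsym a b, hsym b a⟩
  have hinl : ∀ u y, gadAdj (gadEdgeRel E lab) (Sum.inl u) y ↔ E u.val (gadNode E lab y) := by
    rintro u (u' | ⟨e, _ | _⟩)
    · exact iff_of_false id (h2.not_adj_of_lab_eq_true h1 u.2 u'.2)
    · have hp := gadPath_gadNode e
      simp only [gadAdj, true_and, Bool.false_eq_true, false_and, or_false]
      refine ⟨fun h => h ▸ hp.2.2.2.2.1, fun h => Subtype.ext ?_⟩
      exact h2.eq_of_adj hp.2.1 (by decide) (by decide) (hsym _ _ hp.2.2.2.2.1) hp.1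
        (hsym _ _ h) u.2
    · have hp := gadPath_gadNode e
      simp only [gadAdj, true_and, Bool.true_eq_false, false_and, false_or]
      refine ⟨fun h => h ▸ hsym _ _ hp.2.2.2.2.2.2, fun h => Subtype.ext ?_⟩
      exact h2.eq_of_adj hp.2.2.1 (by decide) (by decide) hp.2.2.2.2.2.2 hp.2.2.2.1
        (hsym _ _ h) u.2
  have hinr : ∀ e e', gadAdj (gadEdgeRel E lab) (Sum.inr (e, false)) (Sum.inr (e', true)) ↔
      E (gadNode E lab (Sum.inr (e, false))) (gadNode E lab (Sum.inr (e', true))) := by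
    intro e e'
    simp only [gadAdj, ne_eq, Bool.false_eq_true, not_false_eq_true, and_true]
    exact ⟨fun h => h ▸ (gadPath_gadNode e).2.2.2.2.2.1, eq_of_adj_gadNode hsym h2⟩
  rcases x with u | ⟨e, _ | _⟩
  · exact hinl u y
  all_goals rcases y with u' | ⟨e', _ | _⟩
  · exact (gadAdj_comm _ _ _).trans ((hinl u' _).trans (hE _ _))
  · exact iff_of_false (by simp [gadAdj]) (h2.not_adj_of_lab_eq_true h1
      (gadPath_gadNode e).2.1 (gadPath_gadNode e').2.1)
  · exact hinr e e'
  · exact (gadAdj_comm _ _ _).trans ((hinl u' _).trans (hE _ _))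
  · exact (gadAdj_comm _ _ _).trans ((hinr e' e).trans (hE _ _))
  · exact iff_of_false (by simp [gadAdj]) (h2.not_adj_of_lab_eq_true h1
      (gadPath_gadNode e).2.2.1 (gadPath_gadNode e').2.2.1)

end Gadget

theorem stmt10_general {V : Type} [Fintype V] (E : V → V → Prop) (lab : V → Fin 3 → Bool)
    (hsym : ∀ u v, E u v → E v u)
    (h1 : phi1 lab) (h2 : phi2 E lab) (h3 : phi3 E lab) (h4 : phi4 E lab) :
    IsStrictLinearOrderRel
        (fun u z : {v : V // lab v 0 = true} => GadEdge E lab u.val z.val) ∧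
      IsoLabGraph E lab
        (gadAdj (fun u z : {v : V // lab v 0 = true} => GadEdge E lab u.val z.val))
        (gadLab (fun u z : {v : V // lab v 0 = true} => GadEdge E lab u.val z.val)) :=
  ⟨isStrictLinearOrderRel_gadEdgeRel h3 h4,
    isoLabGraph_of_bijective ⟨gadNode_injective hsym h1 h2, gadNode_surjective hsym h1 h2 h3 h4⟩
      (gadAdj_iff_adj_gadNode hsym h1 h2) (gadLab_eq_lab_gadNode h1)⟩

/-- if a finite undirected labelled graph of dimension 3 satisfies
φ₁, φ₂, φ₃ and φ₄, then the gadgetised-edge relation on its `P₁`-nodes is a strict linear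
order and the graph is isomorphic to its gadgetisation. -/
theorem stmt10 {V : Type} [Fintype V] (E : V → V → Prop) (lab : V → Fin 3 → Bool)
    (hsym : ∀ u v, E u v → E v u) (hirr : ∀ v, ¬ E v v)
    (h1 : phi1 lab) (h2 : phi2 E lab) (h3 : phi3 E lab) (h4 : phi4 E lab) :
    IsStrictLinearOrderRel
        (fun u z : {v : V // lab v 0 = true} => GadEdge E lab u.val z.val) ∧
      IsoLabGraph E lab
        (gadAdj (fun u z : {v : V // lab v 0 = true} => GadEdge E lab u.val z.val))
        (gadLab (fun u z : {v : V // lab v 0 = true} => GadEdge E lab u.val z.val)) :=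
  stmt10_general E lab hsym h1 h2 h3 h4
end
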